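/- Let 𝒪 and 𝓔 be finite sets, S_1, S_2 : 𝒪 → 𝓔 two maps, and G : 𝓔 × 𝓔 → [0, ∞) a function such that for every Δ_1 ∈ 𝓔, the sum over Δ_2 ∈ 𝓔 of G(Δ_1, Δ_2) is at most 1. For Δ ∈ 𝓔 let n_1(Δ) = |S_1⁻¹(Δ)| and n_2(Δ) = |S_2⁻¹(Δ)|. If G(S_1(a), S_2(a)) > 0 for every a ∈ 𝒪, then ∏_{Δ∈𝓔} n_1(Δ)! ≤ e^{|𝒪|} · (∏_{Δ∈𝓔} n_2(Δ)!) · ∏_{a∈𝒪} G(S_1(a), S_2(a))⁻¹. -/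

import Mathlib

open Finset

-- single-term binomial bound
lemma binom_term_le {p s : ℝ} (hp : 0 ≤ p) (hs : 0 ≤ s) (a b : ℕ) :
    ((a + b).choose a : ℝ) * p ^ a * s ^ b ≤ (p + s) ^ (a + b) := by
  rw [add_pow]
  have ha : a ∈ Finset.range (a + b + 1) := by
    simp [Nat.lt_succ_iff]
  have := Finset.single_le_sum
    (f := fun k => p ^ k * s ^ (a + b - k) * ((a + b).choose k : ℝ))
    (fun k _ => by positivity) ha
  simpa [Nat.add_sub_cancel_left, mul_comm, mul_assoc, mul_left_comm] using this

lemma key_row {ι : Type*} (s : Finset ι) (p : ι → ℝ) (m : ι → ℕ)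
    (hp : ∀ i ∈ s, 0 ≤ p i) :
    (∏ i ∈ s, p i ^ m i) * ((∑ i ∈ s, m i).factorial : ℝ)
      ≤ (∏ i ∈ s, ((m i).factorial : ℝ)) * (∑ i ∈ s, p i) ^ (∑ i ∈ s, m i) := by
  classical
  induction s using Finset.induction_on with
  | empty => simp
  | insert _ _ hx ih =>
    rename_i j t
    rw [Finset.prod_insert hx, Finset.prod_insert hx, Finset.sum_insert hx,
      Finset.sum_insert hx]
    have hpj : 0 ≤ p j := hp j (Finset.mem_insert_self _ _)
    have hpt : ∀ i ∈ t, 0 ≤ p i := fun i hi => hp i (Finset.mem_insert_of_mem hi)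
    have hps : 0 ≤ ∑ i ∈ t, p i := Finset.sum_nonneg hpt
    have ih' := ih hpt
    set a := m j
    set b := ∑ i ∈ t, m i
    -- (a+b)! = choose (a+b) a * a! * b!
    have hfact : ((a + b).factorial : ℝ)
        = ((a + b).choose a : ℝ) * (a.factorial : ℝ) * (b.factorial : ℝ) := by
      rw [← Nat.cast_mul, ← Nat.cast_mul]
      congr 1
      have := Nat.choose_mul_factorial_mul_factorial (Nat.le_add_right a b)
      simpa [Nat.add_sub_cancel_left] using this.symm
    calc p j ^ a * (∏ i ∈ t, p i ^ m i) * ((a + b).factorial : ℝ)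
        = ((a + b).choose a : ℝ) * p j ^ a * ((a.factorial : ℝ) *
            ((∏ i ∈ t, p i ^ m i) * (b.factorial : ℝ))) := by
          rw [hfact]; ring
      _ ≤ ((a + b).choose a : ℝ) * p j ^ a * ((a.factorial : ℝ) *
            ((∏ i ∈ t, ((m i).factorial : ℝ)) * (∑ i ∈ t, p i) ^ b)) := by
          apply mul_le_mul_of_nonneg_left _ (by positivity)
          exact mul_le_mul_of_nonneg_left ih' (by positivity)
      _ = (a.factorial : ℝ) * (∏ i ∈ t, ((m i).factorial : ℝ)) *
            (((a + b).choose a : ℝ) * p j ^ a * (∑ i ∈ t, p i) ^ b) := by ring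
      _ ≤ (a.factorial : ℝ) * (∏ i ∈ t, ((m i).factorial : ℝ)) *
            (p j + ∑ i ∈ t, p i) ^ (a + b) := by
          apply mul_le_mul_of_nonneg_left (binom_term_le hpj hps a b) (by positivity)
      _ = _ := by ring

/-- Displacement of local factorials: if `S₁, S₂ : 𝒪 → 𝓔`, `G : 𝓔 × 𝓔 → [0,∞)`
has all row sums at most `1`, and `G(S₁ a, S₂ a) > 0` for all `a`, then
`∏_Δ n₁(Δ)! ≤ e^{|𝒪|} * ∏_Δ n₂(Δ)! * ∏_a G(S₁ a, S₂ a)⁻¹`, where `nᵢ(Δ)`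
counts the preimages of `Δ` under `Sᵢ`. -/
theorem displacement_of_local_factorials {O E : Type*} [Fintype O] [Fintype E]
    [DecidableEq E] (S₁ S₂ : O → E) (G : E → E → ℝ)
    (hG0 : ∀ Δ₁ Δ₂, 0 ≤ G Δ₁ Δ₂)
    (hrow : ∀ Δ₁, ∑ Δ₂, G Δ₁ Δ₂ ≤ 1)
    (hpos : ∀ a, 0 < G (S₁ a) (S₂ a)) :
    (∏ Δ : E, ((Finset.univ.filter fun a => S₁ a = Δ).card.factorial : ℝ))
      ≤ Real.exp (Fintype.card O) *
        (∏ Δ : E, ((Finset.univ.filter fun a => S₂ a = Δ).card.factorial : ℝ)) *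
        ∏ a : O, (G (S₁ a) (S₂ a))⁻¹ := by
  classical
  set m : E → E → ℕ := fun Δ₁ Δ₂ =>
    (Finset.univ.filter fun a => S₁ a = Δ₁ ∧ S₂ a = Δ₂).card with hm
  have hn1 : ∀ Δ₁, (Finset.univ.filter fun a => S₁ a = Δ₁).card = ∑ Δ₂, m Δ₁ Δ₂ := by
    intro Δ₁
    rw [Finset.card_eq_sum_card_fiberwise (f := S₂) (t := Finset.univ)
      (fun a _ => Finset.mem_univ _)]
    apply Finset.sum_congr rfl
    intro Δ₂ _
    congr 1
    ext a
    simp [and_comm, hm, and_assoc]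
  have hn2 : ∀ Δ₂, (Finset.univ.filter fun a => S₂ a = Δ₂).card = ∑ Δ₁, m Δ₁ Δ₂ := by
    intro Δ₂
    rw [Finset.card_eq_sum_card_fiberwise (f := S₁) (t := Finset.univ)
      (fun a _ => Finset.mem_univ _)]
    apply Finset.sum_congr rfl
    intro Δ₁ _
    congr 1
    ext a
    simp [hm, and_comm]
  have hprodG : (∏ a : O, G (S₁ a) (S₂ a))
      = ∏ Δ₁, ∏ Δ₂, G Δ₁ Δ₂ ^ m Δ₁ Δ₂ := by
    rw [← Finset.prod_fiberwise (g := fun a : O => (S₁ a, S₂ a))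
      (f := fun a => G (S₁ a) (S₂ a)) Finset.univ, Fintype.prod_prod_type]
    apply Finset.prod_congr rfl; intro Δ₁ _
    apply Finset.prod_congr rfl; intro Δ₂ _
    rw [Finset.prod_congr rfl (fun a ha => by
      simp only [Finset.mem_filter, Prod.mk.injEq] at ha
      rw [ha.2.1, ha.2.2]), Finset.prod_const]
    congr 1
    simp [hm, Prod.ext_iff]
  -- main inequality: ∏ G * ∏ n₁! ≤ ∏ n₂!
  have hGpos : 0 < ∏ a : O, G (S₁ a) (S₂ a) := Finset.prod_pos (fun a _ => hpos a)
  have main : (∏ a : O, G (S₁ a) (S₂ a)) *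
      (∏ Δ : E, ((Finset.univ.filter fun a => S₁ a = Δ).card.factorial : ℝ))
      ≤ ∏ Δ : E, ((Finset.univ.filter fun a => S₂ a = Δ).card.factorial : ℝ) := by
    rw [hprodG, ← Finset.prod_mul_distrib]
    calc ∏ Δ₁, ((∏ Δ₂, G Δ₁ Δ₂ ^ m Δ₁ Δ₂) *
          ((Finset.univ.filter fun a => S₁ a = Δ₁).card.factorial : ℝ))
        ≤ ∏ Δ₁, ∏ Δ₂, ((m Δ₁ Δ₂).factorial : ℝ) := by
          apply Finset.prod_le_prod
          · intro Δ₁ _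
            exact mul_nonneg (Finset.prod_nonneg fun Δ₂ _ => pow_nonneg (hG0 _ _) _)
              (Nat.cast_nonneg _)
          · intro Δ₁ _
            rw [hn1 Δ₁]
            calc (∏ Δ₂, G Δ₁ Δ₂ ^ m Δ₁ Δ₂) * ((∑ Δ₂, m Δ₁ Δ₂).factorial : ℝ)
                ≤ (∏ Δ₂, ((m Δ₁ Δ₂).factorial : ℝ)) *
                    (∑ Δ₂, G Δ₁ Δ₂) ^ (∑ Δ₂, m Δ₁ Δ₂) :=
                  key_row Finset.univ (G Δ₁) (m Δ₁) (fun i _ => hG0 Δ₁ i)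
              _ ≤ (∏ Δ₂, ((m Δ₁ Δ₂).factorial : ℝ)) * 1 := by
                  apply mul_le_mul_of_nonneg_left _ (by positivity)
                  exact pow_le_one₀ (Finset.sum_nonneg fun i _ => hG0 Δ₁ i) (hrow Δ₁)
              _ = _ := mul_one _
      _ = ∏ Δ₂, ∏ Δ₁, ((m Δ₁ Δ₂).factorial : ℝ) := Finset.prod_comm
      _ ≤ ∏ Δ₂ : E, ((Finset.univ.filter fun a => S₂ a = Δ₂).card.factorial : ℝ) := by
          apply Finset.prod_le_prod (fun _ _ => by positivity)
          intro Δ₂ _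
          rw [← Nat.cast_prod, hn2 Δ₂, Nat.cast_le]
          exact Nat.le_of_dvd (Nat.factorial_pos _)
            (Nat.prod_factorial_dvd_factorial_sum _ _)
  have hinv : (∏ a : O, (G (S₁ a) (S₂ a))⁻¹) = (∏ a : O, G (S₁ a) (S₂ a))⁻¹ := by
    rw [← Finset.prod_inv_distrib]
  have h1 : (1 : ℝ) ≤ Real.exp (Fintype.card O) := by
    rw [← Real.exp_zero]
    exact Real.exp_le_exp.mpr (by positivity)
  calc (∏ Δ : E, ((Finset.univ.filter fun a => S₁ a = Δ).card.factorial : ℝ))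
      ≤ (∏ Δ : E, ((Finset.univ.filter fun a => S₂ a = Δ).card.factorial : ℝ)) *
          (∏ a : O, G (S₁ a) (S₂ a))⁻¹ := by
        rw [mul_comm, ← le_div_iff₀ hGpos] at main
        rwa [div_eq_mul_inv] at main
    _ ≤ Real.exp (Fintype.card O) *
          (∏ Δ : E, ((Finset.univ.filter fun a => S₂ a = Δ).card.factorial : ℝ)) *
          ∏ a : O, (G (S₁ a) (S₂ a))⁻¹ := by
        rw [hinv]
        nlinarith [Finset.prod_nonneg (fun Δ (_ : Δ ∈ Finset.univ) =>
          Nat.cast_nonneg ((Finset.univ.filter fun a => S₂ a = Δ).card.factorial : ℕ) (α := ℝ)),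
          inv_nonneg.mpr hGpos.le, h1,
          mul_nonneg (Finset.prod_nonneg (fun Δ (_ : Δ ∈ Finset.univ) =>
          Nat.cast_nonneg ((Finset.univ.filter fun a => S₂ a = Δ).card.factorial : ℕ) (α := ℝ))) (inv_nonneg.mpr hGpos.le)]
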